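/- Suppose the degree-1 geometric graph G₁ is connected. Let l be a node maximizing r 0 (so r 0 l = r₁(V)), and let m be the hop radius of G₁ centered at l, i.e., the maximum over nodes i of the graph distance in G₁ between i and l. Then r m i = r₁(V) for every node i, and r k i = r₁(V) for all k ≥ m, so the algorithm converges in m iterations with final range r₁(V) at every node. -/

import Mathlib

open Metric

/-- The geometric graph of radius `r` on points `V`. -/
def geomGraph (n : ℕ) (V : Fin n → EuclideanSpace ℝ (Fin 2)) (r : ℝ) :
    SimpleGraph (Fin n) where
  Adj i j := i ≠ j ∧ dist (V i) (V j) ≤ r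
  symm := ⟨fun i j ⟨h1, h2⟩ => ⟨h1.symm, by rwa [dist_comm]⟩⟩
  loopless := ⟨fun i ⟨h, _⟩ => h rfl⟩

/-- The degree-1 radius `r₁(V) = max_i min_{j ≠ i} ‖V i − V j‖`. -/
noncomputable def degOneRadius (n : ℕ) (V : Fin n → EuclideanSpace ℝ (Fin 2)) : ℝ :=
  ⨆ i : Fin n, ⨅ j : {j : Fin n // j ≠ i}, dist (V i) (V j.1)

/-- The iterative range algorithm: `r 0 i = min_{j ≠ i} d i j`, and
`r (k+1) i = max_{j ∈ S k i} r k j` where `S k i = {j : d j i ≤ r k j}`. -/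
noncomputable def rIter (n : ℕ) (V : Fin n → EuclideanSpace ℝ (Fin 2)) :
    ℕ → Fin n → ℝ
  | 0 => fun i => ⨅ j : {j : Fin n // j ≠ i}, dist (V i) (V j.1)
  | k + 1 => fun i =>
      ⨆ j : {j : Fin n // dist (V j) (V i) ≤ rIter n V k j}, rIter n V k j.1

variable (n : ℕ) (V : Fin n → EuclideanSpace ℝ (Fin 2))

lemma rIter_succ (k : ℕ) (i : Fin n) :
    rIter n V (k+1) i
      = ⨆ j : {j : Fin n // dist (V j) (V i) ≤ rIter n V k j}, rIter n V k j.1 := rfl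

lemma rIter_nonneg : ∀ k i, 0 ≤ rIter n V k i := by
  intro k
  induction k with
  | zero => intro i; exact Real.iInf_nonneg fun j => dist_nonneg
  | succ k ih =>
      intro i
      have h0 := ih i
      have hmem : dist (V i) (V i) ≤ rIter n V k i := by simpa using h0
      calc 0 ≤ rIter n V k i := h0
        _ ≤ _ := by
          rw [rIter_succ]
          exact le_ciSup (f := fun j : {j : Fin n // dist (V j) (V i) ≤ rIter n V k j} => rIter n V k j.1) (Set.Finite.bddAbove (Set.finite_range _))
            (⟨i, hmem⟩ : {j : Fin n // dist (V j) (V i) ≤ rIter n V k j})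

lemma rIter_mono_succ (k : ℕ) (i : Fin n) : rIter n V k i ≤ rIter n V (k+1) i := by
  have hmem : dist (V i) (V i) ≤ rIter n V k i := by simpa using rIter_nonneg n V k i
  rw [rIter_succ]
  exact le_ciSup (f := fun j : {j : Fin n // dist (V j) (V i) ≤ rIter n V k j} => rIter n V k j.1) (Set.Finite.bddAbove (Set.finite_range _))
    (⟨i, hmem⟩ : {j : Fin n // dist (V j) (V i) ≤ rIter n V k j})

lemma rIter_mono (i : Fin n) : Monotone fun k => rIter n V k i :=
  monotone_nat_of_le_succ fun k => rIter_mono_succ n V k i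

lemma rIter_le : ∀ k i, rIter n V k i ≤ degOneRadius n V := by
  intro k
  induction k with
  | zero =>
      intro i
      exact le_ciSup (Set.Finite.bddAbove (Set.finite_range _)) i
  | succ k ih =>
      intro i
      have hmem : dist (V i) (V i) ≤ rIter n V k i := by simpa using rIter_nonneg n V k i
      have : Nonempty {j : Fin n // dist (V j) (V i) ≤ rIter n V k j} := ⟨⟨i, hmem⟩⟩
      rw [rIter_succ]
      exact ciSup_le fun j => ih j.1

lemma key (l : Fin n) (hl : rIter n V 0 l = degOneRadius n V) :
    ∀ k i, ∀ p : (geomGraph n V (degOneRadius n V)).Walk l i, p.length ≤ k →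
      rIter n V k i = degOneRadius n V := by
  intro k
  induction k with
  | zero =>
      intro i p hp
      have : p.length = 0 := Nat.le_zero.mp hp
      have hil : l = i := (SimpleGraph.Walk.eq_of_length_eq_zero this)
      subst hil; exact hl
  | succ k ih =>
      intro i p hp
      have hle := rIter_le n V (k+1) i
      by_cases hi : i = l
      · subst hi
        have h1 : rIter n V k i = degOneRadius n V := ih i SimpleGraph.Walk.nil (by simp)
        have := rIter_mono_succ n V k i
        linarith
      · obtain ⟨j, hadj, q, hq⟩ :=
          SimpleGraph.Walk.exists_eq_cons_of_ne (Ne.symm (fun h => hi h.symm)) p.reverse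
        have hlen : q.length ≤ k := by
          have : p.reverse.length = q.length + 1 := by rw [hq]; simp
          have h2 : p.reverse.length = p.length := SimpleGraph.Walk.length_reverse p
          omega
        have hj : rIter n V k j = degOneRadius n V := by
          apply ih j q.reverse
          simpa using hlen
        have hdij : dist (V i) (V j) ≤ degOneRadius n V := hadj.2
        have hmem : dist (V j) (V i) ≤ rIter n V k j := by
          rw [dist_comm, hj]; exact hdij
        have hge : degOneRadius n V ≤ rIter n V (k+1) i := by
          rw [← hj, rIter_succ]
          exact le_ciSup (f := fun j' : {j' : Fin n // dist (V j') (V i) ≤ rIter n V k j'} => rIter n V k j'.1) (Set.Finite.bddAbove (Set.finite_range _))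
            (⟨j, hmem⟩ : {j' : Fin n // dist (V j') (V i) ≤ rIter n V k j'})
        linarith

theorem rIter_converges_in_hop_radius (n : ℕ) (hn : 2 ≤ n)
    (V : Fin n → EuclideanSpace ℝ (Fin 2))
    (hconn : (geomGraph n V (degOneRadius n V)).Connected)
    (l : Fin n)
    (hmax : ∀ j, rIter n V 0 j ≤ rIter n V 0 l)
    (hl : rIter n V 0 l = degOneRadius n V)
    (m : ℕ)
    (hm : m = ⨆ i : Fin n, (geomGraph n V (degOneRadius n V)).dist i l) :
    (∀ i, rIter n V m i = degOneRadius n V) ∧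
    (∀ k, m ≤ k → ∀ i, rIter n V k i = degOneRadius n V) := by
  have hmain : ∀ i, rIter n V m i = degOneRadius n V := by
    intro i
    obtain ⟨p, hp⟩ := (hconn l i).exists_walk_length_eq_dist
    apply key n V l hl m i p
    rw [hp]
    rw [SimpleGraph.dist_comm]
    rw [hm]
    exact le_ciSup (f := fun i : Fin n => (geomGraph n V (degOneRadius n V)).dist i l) (Set.Finite.bddAbove (Set.finite_range _)) i
  refine ⟨hmain, fun k hk i => ?_⟩
  have h1 := rIter_mono n V i hk
  have h2 := rIter_le n V k i
  have := hmain i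
  simp only at h1
  linarith
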